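/- arXiv:2002.12463 — 3 statements merged into one kernel-verified Lean document; each statement's English description precedes it below -/
import Mathlib

section
/- Let Y be a finite set of classes, x ∈ ℝ^m, f : ℝ^m → Y a classifier, and σ > 0. Suppose there exist p_A, p_B ∈ (0,1) and a class c_A ∈ Y such that P_{ε ~ N(0, σ²𝟙)}( f(x + ε) = c_A ) ≥ p_A ≥ p_B ≥ max_{c ≠ c_A} P_{ε ~ N(0, σ²𝟙)}( f(x + ε) = c ). Then for every δ ∈ ℝ^m with ‖δ‖₂ < (σ/2)(Φ⁻¹(p_A) − Φ⁻¹(p_B)) and every class c_B ≠ c_A, it holds that P_{ε ~ N(0, σ²𝟙)}( f(x + δ + ε) = c_A ) > P_{ε ~ N(0, σ²𝟙)}( f(x + δ + ε) = c_B ); in particular the smoothed classifier g(x) := argmax_c P_{ε ~ N(0,σ²𝟙)}(f(x+ε) = c) satisfies g(x + δ) = c_A. -/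
/-!
Translating `N(0, σ²𝟙)` by `δ` multiplies its density by `exp ((⟪δ, z⟫ - ‖δ‖² / 2) / σ²)`, an
increasing function of `⟪δ, z⟫`. Hence (Neyman–Pearson), among all sets of a given Gaussian
measure, a half-space `{⟪δ, z⟫ ≤ t}` has the smallest measure after translation and a half-space
`{⟪δ, z⟫ ≥ t}` the largest. As `⟪δ, ·⟫` is a centred Gaussian of standard deviation `σ‖δ‖`, these
extremal values are explicit: a set of measure at least `Φ(a)` keeps measure at least
`Φ(a - ‖δ‖/σ)`, and one of measure at most `Φ(b)` gets measure at most `Φ(b + ‖δ‖/σ)`. For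
`a = Φ⁻¹(p_A)` and `b = Φ⁻¹(p_B)` the radius bound says exactly `b + ‖δ‖/σ < a - ‖δ‖/σ`.
-/

open MeasureTheory ProbabilityTheory Matrix Set

noncomputable def Phi (x : ℝ) : ℝ := ((gaussianReal 0 1) (Set.Iic x)).toReal

noncomputable def PhiInv : ℝ → ℝ := Function.invFun Phi

noncomputable def gaussianPDF {d : ℕ} (μ : EuclideanSpace ℝ (Fin d))
    (S : Matrix (Fin d) (Fin d) ℝ) (z : EuclideanSpace ℝ (Fin d)) : ℝ :=
  (2 * Real.pi) ^ (-(d : ℝ) / 2) * S.det ^ (-(1 : ℝ) / 2) *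
    Real.exp (-(1 / 2) * ((fun i => z i - μ i) ⬝ᵥ (S⁻¹ *ᵥ fun i => z i - μ i)))

noncomputable def gaussianMeasure {d : ℕ} (μ : EuclideanSpace ℝ (Fin d))
    (S : Matrix (Fin d) (Fin d) ℝ) : Measure (EuclideanSpace ℝ (Fin d)) :=
  volume.withDensity fun z => ENNReal.ofReal (gaussianPDF μ S z)

open scoped NNReal ENNReal RealInnerProductSpace

section Phi

open Filter

lemma continuous_cdf (μ : Measure ℝ) [IsProbabilityMeasure μ] [NullSingletonClass μ] :
    Continuous (cdf μ) := by
  refine continuous_iff_continuousAt.2 fun x =>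
    (monotone_cdf μ).continuousAt_iff_leftLim_eq_rightLim.2 ?_
  have hx : ENNReal.ofReal (cdf μ x - Function.leftLim (cdf μ) x) = 0 := by
    rw [← StieltjesFunction.measure_singleton, measure_cdf, measure_singleton]
  rw [StieltjesFunction.rightLim_eq]
  exact le_antisymm ((monotone_cdf μ).leftLim_le le_rfl)
    (sub_nonpos.1 (ENNReal.ofReal_eq_zero.1 hx))

lemma strictMono_cdf {μ : Measure ℝ} [IsProbabilityMeasure μ] (h : volume ≪ μ) :
    StrictMono (cdf μ) := by
  intro a b hab
  have hpos : 0 < ENNReal.ofReal (cdf μ b - cdf μ a) := by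
    rw [← StieltjesFunction.measure_Ioc, measure_cdf, pos_iff_ne_zero]
    exact fun h0 => by simpa [hab.not_ge] using h h0
  simpa using hpos

lemma Phi_eq_cdf : Phi = cdf (gaussianReal 0 1) := by
  ext x
  rw [cdf_eq_real]
  rfl

lemma Phi_strictMono : StrictMono Phi :=
  Phi_eq_cdf ▸ strictMono_cdf (gaussianReal_absolutelyContinuous' 0 one_ne_zero)

lemma Phi_PhiInv {p : ℝ} (hp : p ∈ Ioo 0 1) : Phi (PhiInv p) = p := by
  refine Function.invFun_eq ?_
  have := nullSingletonClass_gaussianReal (μ := 0) one_ne_zero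
  rw [Phi_eq_cdf]
  obtain ⟨a, ha⟩ := ((tendsto_cdf_atBot _).eventually_lt_const hp.1).exists
  obtain ⟨b, hb⟩ := ((tendsto_cdf_atTop _).eventually_const_lt hp.2).exists
  obtain ⟨x, -, hx⟩ := intermediate_value_uIcc (continuous_cdf (gaussianReal 0 1)).continuousOn
    (Set.mem_uIcc_of_le ha.le hb.le)
  exact ⟨x, hx⟩

lemma ofReal_Phi (x : ℝ) : ENNReal.ofReal (Phi x) = gaussianReal 0 1 (Iic x) :=
  ENNReal.ofReal_toReal (measure_ne_top _ _)

end Phi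

namespace MeasureTheory

theorem lintegral_fin_nat_prod_eq_prod {n : ℕ} {E : Type*} [MeasurableSpace E]
    {μ : Fin n → Measure E} [∀ i, SigmaFinite (μ i)]
    {f : Fin n → E → ℝ≥0∞} (hf : ∀ i, Measurable (f i)) :
    ∫⁻ x, ∏ i, f i (x i) ∂(Measure.pi μ) = ∏ i, ∫⁻ x, f i x ∂(μ i) := by
  induction n with
  | zero => simp
  | succ n ih =>
      calc
        _ = ∫⁻ x : E × (Fin n → E), f 0 x.1 * ∏ i : Fin n, f i.succ (x.2 i)
            ∂((μ 0).prod (Measure.pi fun i ↦ μ i.succ)) := by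
          rw [← (measurePreserving_piFinSuccAbove μ 0).symm.lintegral_comp_emb
            (MeasurableEquiv.measurableEmbedding _)]
          refine lintegral_congr fun x => ?_
          simp [Fin.prod_univ_succ, Fin.insertNthEquiv]
        _ = (∫⁻ x, f 0 x ∂μ 0) * ∏ i : Fin n, ∫⁻ x, f i.succ x ∂(μ i.succ) := by
          rw [← ih fun i => hf i.succ, ← lintegral_prod_mul (hf 0).aemeasurable]
          exact (Finset.measurable_prod _ fun i _ =>
            (hf i.succ).comp (measurable_pi_apply i)).aemeasurable
        _ = ∏ i, ∫⁻ x, f i x ∂(μ i) := by rw [Fin.prod_univ_succ]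

theorem Measure.pi_withDensity {n : ℕ} {E : Type*} [MeasurableSpace E]
    {μ : Fin n → Measure E} [∀ i, SigmaFinite (μ i)]
    {f : Fin n → E → ℝ≥0∞} (hf : ∀ i, Measurable (f i))
    [∀ i, SigmaFinite ((μ i).withDensity (f i))] :
    Measure.pi (fun i => (μ i).withDensity (f i))
      = (Measure.pi μ).withDensity fun x => ∏ i, f i (x i) := by
  refine Measure.pi_eq fun s hs => ?_
  rw [withDensity_apply _ (.univ_pi hs), ← lintegral_indicator (.univ_pi hs)]
  have : (Set.univ.pi s).indicator (fun x => ∏ i, f i (x i))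
      = fun x => ∏ i, (s i).indicator (f i) (x i) := by
    ext x
    by_cases hx : x ∈ Set.univ.pi s
    · rw [Set.indicator_of_mem hx]
      exact Finset.prod_congr rfl fun i _ => (Set.indicator_of_mem (hx i trivial) _).symm
    · obtain ⟨i, hi⟩ : ∃ i, x i ∉ s i := by simpa using hx
      rw [Set.indicator_of_notMem hx,
        Finset.prod_eq_zero (Finset.mem_univ i) (Set.indicator_of_notMem hi _)]
  rw [this, lintegral_fin_nat_prod_eq_prod fun i => (hf i).indicator (hs i)]
  exact Finset.prod_congr rfl fun i _ => by
    rw [withDensity_apply _ (hs i), lintegral_indicator (hs i)]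


theorem MeasurePreserving.map_withDensity_comp {α β : Type*} [MeasurableSpace α]
    [MeasurableSpace β] {μ : Measure α} {ν : Measure β} {e : α → β}
    (he : MeasurePreserving e μ ν) {g : β → ℝ≥0∞} (hg : Measurable g) :
    (μ.withDensity (g ∘ e)).map e = ν.withDensity g := by
  ext s hs
  rw [Measure.map_apply he.measurable hs, withDensity_apply _ (he.measurable hs),
    withDensity_apply _ hs, ← he.setLIntegral_comp_preimage hs hg]
  rfl

theorem setLIntegral_le_setLIntegral_of_le_threshold {α : Type*}
    [MeasurableSpace α] {μ : Measure α} [IsFiniteMeasure μ] {A G : Set α}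
    (hA : MeasurableSet A) (hG : MeasurableSet G) {R : α → ℝ≥0∞} {R₀ : ℝ≥0∞}
    (hAG : ∀ z ∈ A \ G, R z ≤ R₀) (hGA : ∀ z ∈ G \ A, R₀ ≤ R z) (hμ : μ A ≤ μ G) :
    ∫⁻ z in A, R z ∂μ ≤ ∫⁻ z in G, R z ∂μ := by
  have hdiff : μ (A \ G) ≤ μ (G \ A) := by
    rw [← measure_inter_add_sdiff A hG, ← measure_inter_add_sdiff G hA, Set.inter_comm] at hμ
    exact (ENNReal.add_le_add_iff_left (measure_ne_top _ _)).1 hμ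
  have key : ∫⁻ z in A \ G, R z ∂μ ≤ ∫⁻ z in G \ A, R z ∂μ :=
    calc ∫⁻ z in A \ G, R z ∂μ ≤ ∫⁻ _ in A \ G, R₀ ∂μ := setLIntegral_mono' (hA.diff hG) hAG
      _ = R₀ * μ (A \ G) := setLIntegral_const _ _
      _ ≤ R₀ * μ (G \ A) := by gcongr
      _ = ∫⁻ _ in G \ A, R₀ ∂μ := (setLIntegral_const _ _).symm
      _ ≤ ∫⁻ z in G \ A, R z ∂μ := setLIntegral_mono' (hG.diff hA) hGA
  rw [← lintegral_inter_add_sdiff _ A hG, ← lintegral_inter_add_sdiff _ G hA, Set.inter_comm]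
  gcongr

end MeasureTheory

section stdGaussian

variable {E : Type*} [NormedAddCommGroup E] [InnerProductSpace ℝ E] [FiniteDimensional ℝ E]
  [MeasurableSpace E] [BorelSpace E]

lemma stdGaussian_map_inner (w : E) :
    (stdGaussian E).map (fun z => ⟪w, z⟫) = (gaussianReal 0 1).map (‖w‖ * ·) := by
  have h := IsGaussian.map_eq_gaussianReal (μ := stdGaussian E) (innerSL ℝ w)
  rw [integral_strongDual_stdGaussian, variance_dual_stdGaussian, innerSL_apply_norm] at h
  rw [gaussianReal_map_const_mul, mul_zero, mul_one]
  convert h using 2 <;> ext <;> simp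

lemma stdGaussian_setOf_inner_le {w : E} (hw : w ≠ 0) (s : ℝ) :
    stdGaussian E {z | ⟪w, z⟫ ≤ s} = ENNReal.ofReal (Phi (s / ‖w‖)) := by
  have hpre : {z | ⟪w, z⟫ ≤ s} = (fun z => ⟪w, z⟫) ⁻¹' Iic s := rfl
  rw [hpre, ← Measure.map_apply (by fun_prop) measurableSet_Iic, stdGaussian_map_inner,
    Measure.map_apply (by fun_prop) measurableSet_Iic, ofReal_Phi]
  congr 1
  ext y
  simp [le_div_iff₀' (norm_pos_iff.2 hw)]

end stdGaussian

noncomputable abbrev isotropicGaussian (m : ℕ) (σ : ℝ) : Measure (EuclideanSpace ℝ (Fin m)) :=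
  gaussianMeasure 0 (σ ^ 2 • 1)

section IsotropicGaussian

open Real

variable {m : ℕ} {σ : ℝ}

lemma gaussianPDF_smul_one (hσ : 0 < σ) (z : EuclideanSpace ℝ (Fin m)) :
    gaussianPDF 0 (σ ^ 2 • (1 : Matrix (Fin m) (Fin m) ℝ)) z
      = (√(2 * π * σ ^ 2))⁻¹ ^ m * exp (-‖z‖ ^ 2 / (2 * σ ^ 2)) := by
  have hinv : (σ ^ 2 • (1 : Matrix (Fin m) (Fin m) ℝ))⁻¹ = (σ ^ 2)⁻¹ • 1 :=
    Matrix.inv_eq_right_inv (by simp [smul_smul, hσ.ne'])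
  have hconst : (2 * π) ^ (-(m : ℝ) / 2) * ((σ ^ 2) ^ m) ^ (-(1 : ℝ) / 2)
      = (√(2 * π * σ ^ 2))⁻¹ ^ m := by
    rw [sqrt_mul (by positivity), sqrt_sq hσ.le, sqrt_eq_rpow, ← pow_mul, ← rpow_natCast,
      ← rpow_mul (by positivity), mul_inv, mul_pow, inv_pow, inv_pow, ← rpow_natCast,
      ← rpow_mul (by positivity), ← rpow_neg (by positivity), ← rpow_natCast σ,
      ← rpow_neg hσ.le]
    push_cast
    congr 2 <;> ring
  rw [_root_.gaussianPDF, Matrix.det_smul, Matrix.det_one, mul_one, Fintype.card_fin, hinv, hconst,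
    EuclideanSpace.real_norm_sq_eq]
  simp only [PiLp.zero_apply, sub_zero, Matrix.smul_mulVec, Matrix.one_mulVec, dotProduct,
    Pi.smul_apply, smul_eq_mul, Finset.mul_sum, Finset.sum_div, ← Finset.sum_neg_distrib]
  congr 2
  exact Finset.sum_congr rfl fun i _ => by ring

lemma ofReal_gaussianPDF_smul_one (hσ : 0 < σ) (z : EuclideanSpace ℝ (Fin m)) :
    ENNReal.ofReal (gaussianPDF 0 (σ ^ 2 • (1 : Matrix (Fin m) (Fin m) ℝ)) z)
      = ∏ i, ProbabilityTheory.gaussianPDF 0 (.mk (σ ^ 2) (sq_nonneg σ)) (z i) := by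
  simp_rw [ProbabilityTheory.gaussianPDF, ← ENNReal.ofReal_prod_of_nonneg
    (fun i _ => gaussianPDFReal_nonneg _ _ _), gaussianPDFReal, gaussianPDF_smul_one hσ]
  rw [Finset.prod_mul_distrib, Finset.prod_const, Finset.card_univ, Fintype.card_fin,
    ← exp_sum, EuclideanSpace.real_norm_sq_eq, ← Finset.sum_neg_distrib, Finset.sum_div]
  simp

lemma isotropicGaussian_eq_map_pi (hσ : 0 < σ) :
    isotropicGaussian m σ
      = (Measure.pi fun _ : Fin m => gaussianReal 0 (.mk (σ ^ 2) (sq_nonneg σ))).map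
          (WithLp.toLp 2) := by
  have hv : NNReal.mk (σ ^ 2) (sq_nonneg σ) ≠ 0 := by
    simpa [← NNReal.coe_eq_zero] using hσ.ne'
  have : SigmaFinite ((volume : Measure ℝ).withDensity
      (ProbabilityTheory.gaussianPDF 0 (.mk (σ ^ 2) (sq_nonneg σ)))) := by
    rw [← gaussianReal_of_var_ne_zero 0 hv]; infer_instance
  have hpdf : Continuous fun z : EuclideanSpace ℝ (Fin m) =>
      gaussianPDF 0 (σ ^ 2 • (1 : Matrix (Fin m) (Fin m) ℝ)) z := by
    simp only [gaussianPDF_smul_one hσ]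
    fun_prop
  simp_rw [gaussianReal_of_var_ne_zero 0 hv,
    Measure.pi_withDensity fun _ => measurable_gaussianPDF 0 _,
    ← ofReal_gaussianPDF_smul_one hσ, ← volume_pi]
  exact ((PiLp.volume_preserving_toLp (Fin m)).map_withDensity_comp
    hpdf.measurable.ennreal_ofReal).symm

lemma isotropicGaussian_eq_map_stdGaussian (hσ : 0 < σ) :
    isotropicGaussian m σ
      = (stdGaussian (EuclideanSpace ℝ (Fin m))).map (σ • ·) := by
  have hscale : (gaussianReal 0 1).map (σ * ·) = gaussianReal 0 (.mk (σ ^ 2) (sq_nonneg σ)) := by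
    rw [gaussianReal_map_const_mul, mul_zero, mul_one]
  rw [isotropicGaussian_eq_map_pi hσ, ← hscale, ← Measure.pi_map_pi (by fun_prop),
    ← map_pi_eq_stdGaussian, Measure.map_map (by fun_prop) (by fun_prop),
    Measure.map_map (by fun_prop) (by fun_prop)]
  rfl

lemma isProbabilityMeasure_isotropicGaussian (hσ : 0 < σ) :
    IsProbabilityMeasure (isotropicGaussian m σ) := by
  rw [isotropicGaussian_eq_map_stdGaussian hσ]
  exact Measure.isProbabilityMeasure_map (by fun_prop)

lemma isotropicGaussian_setOf_inner_le (hσ : 0 < σ) {w : EuclideanSpace ℝ (Fin m)}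
    (hw : w ≠ 0) (s : ℝ) :
    isotropicGaussian m σ {z | ⟪w, z⟫ ≤ s}
      = ENNReal.ofReal (Phi (s / (σ * ‖w‖))) := by
  rw [isotropicGaussian_eq_map_stdGaussian hσ,
    Measure.map_apply (by fun_prop) (measurableSet_le (by fun_prop) (by fun_prop))]
  have hpre : (σ • ·) ⁻¹' {z | ⟪w, z⟫ ≤ s} = {z | ⟪σ • w, z⟫ ≤ s} := by
    ext z
    simp [real_inner_smul_left, real_inner_smul_right]
  rw [hpre, stdGaussian_setOf_inner_le (smul_ne_zero hσ.ne' hw), norm_smul,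
    Real.norm_of_nonneg hσ.le]

lemma map_add_isotropicGaussian (hσ : 0 < σ) (δ : EuclideanSpace ℝ (Fin m)) :
    (isotropicGaussian m σ).map (δ + ·)
      = (isotropicGaussian m σ).withDensity
          fun z => ENNReal.ofReal (exp ((⟪δ, z⟫ - ‖δ‖ ^ 2 / 2) / σ ^ 2)) := by
  set p := fun z : EuclideanSpace ℝ (Fin m) =>
    ENNReal.ofReal (gaussianPDF 0 (σ ^ 2 • (1 : Matrix (Fin m) (Fin m) ℝ)) z)
  set R := fun z : EuclideanSpace ℝ (Fin m) => ENNReal.ofReal (exp ((⟪δ, z⟫ - ‖δ‖ ^ 2 / 2) / σ ^ 2))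
  have hp : Measurable p := by
    simp only [p, gaussianPDF_smul_one hσ]
    fun_prop
  have hR : Measurable R := by fun_prop
  have hpR : p = (p * R) ∘ (δ + ·) := by
    ext z
    simp only [p, R, Function.comp_apply, Pi.mul_apply, gaussianPDF_smul_one hσ]
    rw [← ENNReal.ofReal_mul (by positivity), mul_assoc _ (exp _), ← exp_add, norm_add_sq_real,
      inner_add_right, real_inner_self_eq_norm_sq]
    congr 3
    field_simp
    ring
  change (volume.withDensity p).map _ = (volume.withDensity p).withDensity R
  rw [← withDensity_mul _ hp hR]
  nth_rw 1 [hpR]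
  exact (measurePreserving_add_left volume δ).map_withDensity_comp (hp.mul hR)

lemma isotropicGaussian_preimage_add (hσ : 0 < σ) (δ : EuclideanSpace ℝ (Fin m))
    {S : Set (EuclideanSpace ℝ (Fin m))} (hS : MeasurableSet S) :
    isotropicGaussian m σ ((δ + ·) ⁻¹' S)
      = ∫⁻ z in S, ENNReal.ofReal (exp ((⟪δ, z⟫ - ‖δ‖ ^ 2 / 2) / σ ^ 2))
          ∂(isotropicGaussian m σ) := by
  rw [← Measure.map_apply (measurable_const_add δ) hS, map_add_isotropicGaussian hσ,
    withDensity_apply _ hS]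

lemma isotropicGaussian_preimage_add_setOf_inner_le (hσ : 0 < σ) (δ : EuclideanSpace ℝ (Fin m))
    {w : EuclideanSpace ℝ (Fin m)} (hw : w ≠ 0) (s : ℝ) :
    isotropicGaussian m σ ((δ + ·) ⁻¹' {z | ⟪w, z⟫ ≤ s})
      = ENNReal.ofReal (Phi ((s - ⟪w, δ⟫) / (σ * ‖w‖))) := by
  have hpre : (δ + ·) ⁻¹' {z | ⟪w, z⟫ ≤ s} = {z | ⟪w, z⟫ ≤ s - ⟪w, δ⟫} := by
    ext z
    simp [inner_add_right, le_sub_iff_add_le']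
  rw [hpre, isotropicGaussian_setOf_inner_le hσ hw]

lemma Phi_sub_le_isotropicGaussian_preimage_add (hσ : 0 < σ) {A : Set (EuclideanSpace ℝ (Fin m))}
    (hA : MeasurableSet A) {a : ℝ}
    (ha : ENNReal.ofReal (Phi a) ≤ isotropicGaussian m σ A)
    (δ : EuclideanSpace ℝ (Fin m)) :
    ENNReal.ofReal (Phi (a - ‖δ‖ / σ))
      ≤ isotropicGaussian m σ ((δ + ·) ⁻¹' A) := by
  rcases eq_or_ne δ 0 with rfl | hδ
  · simpa using ha
  have : IsProbabilityMeasure (isotropicGaussian m σ) :=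
    isProbabilityMeasure_isotropicGaussian hσ
  have hδσ : σ * ‖δ‖ ≠ 0 := mul_ne_zero hσ.ne' (norm_ne_zero_iff.2 hδ)
  set t := σ * ‖δ‖ * a
  set H := {z : EuclideanSpace ℝ (Fin m) | ⟪δ, z⟫ ≤ t}
  have hH : MeasurableSet H := measurableSet_le (by fun_prop) (by fun_prop)
  calc ENNReal.ofReal (Phi (a - ‖δ‖ / σ))
      = isotropicGaussian m σ ((δ + ·) ⁻¹' H) := by
        rw [isotropicGaussian_preimage_add_setOf_inner_le hσ δ hδ, real_inner_self_eq_norm_sq]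
        congr 2
        field_simp
        ring
    _ ≤ isotropicGaussian m σ ((δ + ·) ⁻¹' A) := by
      rw [isotropicGaussian_preimage_add hσ δ hH, isotropicGaussian_preimage_add hσ δ hA]
      refine setLIntegral_le_setLIntegral_of_le_threshold hH hA
        (R₀ := ENNReal.ofReal (exp ((t - ‖δ‖ ^ 2 / 2) / σ ^ 2)))
        (fun z hz => by
          have : ⟪δ, z⟫ ≤ t := hz.1
          gcongr)
        (fun z hz => by
          have : t < ⟪δ, z⟫ := not_le.1 hz.2
          gcongr) ?_
      rw [isotropicGaussian_setOf_inner_le hσ hδ, mul_div_cancel_left₀ a hδσ]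
      exact ha

lemma isotropicGaussian_preimage_add_le_Phi_add (hσ : 0 < σ) {B : Set (EuclideanSpace ℝ (Fin m))}
    (hB : MeasurableSet B) {b : ℝ}
    (hb : isotropicGaussian m σ B ≤ ENNReal.ofReal (Phi b))
    (δ : EuclideanSpace ℝ (Fin m)) :
    isotropicGaussian m σ ((δ + ·) ⁻¹' B)
      ≤ ENNReal.ofReal (Phi (b + ‖δ‖ / σ)) := by
  rcases eq_or_ne δ 0 with rfl | hδ
  · simpa using hb
  have : IsProbabilityMeasure (isotropicGaussian m σ) :=
    isProbabilityMeasure_isotropicGaussian hσ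
  have hδσ : σ * ‖δ‖ ≠ 0 := mul_ne_zero hσ.ne' (norm_ne_zero_iff.2 hδ)
  set t := σ * ‖δ‖ * b
  set G := {z : EuclideanSpace ℝ (Fin m) | ⟪-δ, z⟫ ≤ t}
  have hG : MeasurableSet G := measurableSet_le (by fun_prop) (by fun_prop)
  calc isotropicGaussian m σ ((δ + ·) ⁻¹' B)
      ≤ isotropicGaussian m σ ((δ + ·) ⁻¹' G) := by
        rw [isotropicGaussian_preimage_add hσ δ hG, isotropicGaussian_preimage_add hσ δ hB]
        refine setLIntegral_le_setLIntegral_of_le_threshold hB hG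
          (R₀ := ENNReal.ofReal (exp ((-t - ‖δ‖ ^ 2 / 2) / σ ^ 2)))
          (fun z hz => by
            have : t < ⟪-δ, z⟫ := not_le.1 hz.2
            have : ⟪δ, z⟫ ≤ -t := by rw [inner_neg_left] at this; linarith
            gcongr)
          (fun z hz => by
            have : ⟪-δ, z⟫ ≤ t := hz.1
            have : -t ≤ ⟪δ, z⟫ := by rw [inner_neg_left] at this; linarith
            gcongr) ?_
        rw [isotropicGaussian_setOf_inner_le hσ (neg_ne_zero.2 hδ), norm_neg,
          mul_div_cancel_left₀ b hδσ]
        exact hb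
    _ = ENNReal.ofReal (Phi (b + ‖δ‖ / σ)) := by
        rw [isotropicGaussian_preimage_add_setOf_inner_le hσ δ (neg_ne_zero.2 hδ), inner_neg_left,
          real_inner_self_eq_norm_sq, norm_neg]
        congr 2
        field_simp
        ring

end IsotropicGaussian

theorem smoothing_additive_noise_general
    {m : ℕ} {Y : Type*}
    (x : EuclideanSpace ℝ (Fin m)) (f : EuclideanSpace ℝ (Fin m) → Y)
    (hmeas : ∀ c : Y, MeasurableSet {ε : EuclideanSpace ℝ (Fin m) | f (x + ε) = c})
    (σ : ℝ) (hσ : 0 < σ)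
    (pA pB : ℝ) (hpA : pA ∈ Set.Ioo (0 : ℝ) 1) (hpB : pB ∈ Set.Ioo (0 : ℝ) 1)
    (cA : Y)
    (hA : pA ≤ (gaussianMeasure 0 (σ ^ 2 • (1 : Matrix (Fin m) (Fin m) ℝ))
            {ε | f (x + ε) = cA}).toReal)
    (hB : ∀ c : Y, c ≠ cA →
        (gaussianMeasure 0 (σ ^ 2 • (1 : Matrix (Fin m) (Fin m) ℝ))
            {ε | f (x + ε) = c}).toReal ≤ pB) :
    ∀ δ : EuclideanSpace ℝ (Fin m), ‖δ‖ < σ / 2 * (PhiInv pA - PhiInv pB) →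
      ∀ cB : Y, cB ≠ cA →
        gaussianMeasure 0 (σ ^ 2 • (1 : Matrix (Fin m) (Fin m) ℝ))
            {ε | f (x + δ + ε) = cB}
          < gaussianMeasure 0 (σ ^ 2 • (1 : Matrix (Fin m) (Fin m) ℝ))
            {ε | f (x + δ + ε) = cA} := by
  intro δ hδ cB hcB
  have := isProbabilityMeasure_isotropicGaussian (m := m) hσ
  have hgap : PhiInv pB + ‖δ‖ / σ < PhiInv pA - ‖δ‖ / σ := by
    rw [← sub_pos, show PhiInv pA - ‖δ‖ / σ - (PhiInv pB + ‖δ‖ / σ)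
      = 2 / σ * (σ / 2 * (PhiInv pA - PhiInv pB) - ‖δ‖) by field_simp; ring]
    exact mul_pos (by positivity) (sub_pos.2 hδ)
  have hpre (c : Y) : {ε | f (x + δ + ε) = c} = (δ + ·) ⁻¹' {ε | f (x + ε) = c} := by
    simp only [add_assoc, Set.preimage_ofPred_eq]
  rw [hpre, hpre]
  calc _ ≤ ENNReal.ofReal (Phi (PhiInv pB + ‖δ‖ / σ)) := by
        refine isotropicGaussian_preimage_add_le_Phi_add hσ (hmeas cB) ?_ δ
        rw [Phi_PhiInv hpB, ENNReal.le_ofReal_iff_toReal_le (measure_ne_top _ _) hpB.1.le]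
        exact hB cB hcB
    _ < ENNReal.ofReal (Phi (PhiInv pA - ‖δ‖ / σ)) :=
        (ENNReal.ofReal_lt_ofReal_iff_of_nonneg ENNReal.toReal_nonneg).2 (Phi_strictMono hgap)
    _ ≤ _ := by
        refine Phi_sub_le_isotropicGaussian_preimage_add hσ (hmeas cA) ?_ δ
        rw [Phi_PhiInv hpA]
        exact ENNReal.ofReal_le_of_le_toReal hA

/-- The original randomized smoothing certificate (Cohen et al.)
for additive isotropic Gaussian noise. -/
theorem smoothing_additive_noise
    {m : ℕ} {Y : Type*} [Fintype Y]
    (x : EuclideanSpace ℝ (Fin m)) (f : EuclideanSpace ℝ (Fin m) → Y)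
    (hmeas : ∀ c : Y, MeasurableSet {ε : EuclideanSpace ℝ (Fin m) | f (x + ε) = c})
    (σ : ℝ) (hσ : 0 < σ)
    (pA pB : ℝ) (hpA : pA ∈ Set.Ioo (0 : ℝ) 1) (hpB : pB ∈ Set.Ioo (0 : ℝ) 1)
    (cA : Y)
    (hA : pA ≤ (gaussianMeasure 0 (σ ^ 2 • (1 : Matrix (Fin m) (Fin m) ℝ))
            {ε | f (x + ε) = cA}).toReal)
    (hAB : pB ≤ pA)
    (hB : ∀ c : Y, c ≠ cA →
        (gaussianMeasure 0 (σ ^ 2 • (1 : Matrix (Fin m) (Fin m) ℝ))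
            {ε | f (x + ε) = c}).toReal ≤ pB) :
    ∀ δ : EuclideanSpace ℝ (Fin m), ‖δ‖ < σ / 2 * (PhiInv pA - PhiInv pB) →
      ∀ cB : Y, cB ≠ cA →
        gaussianMeasure 0 (σ ^ 2 • (1 : Matrix (Fin m) (Fin m) ℝ))
            {ε | f (x + δ + ε) = cB}
          < gaussianMeasure 0 (σ ^ 2 • (1 : Matrix (Fin m) (Fin m) ℝ))
            {ε | f (x + δ + ε) = cA} :=
  smoothing_additive_noise_general x f hmeas σ hσ pA pB hpA hpB cA hA hB
end

section
/- Let Σ ∈ ℝ^{d×d} be a symmetric positive-definite matrix, γ ∈ ℝ^d with γ ≠ 0, p ∈ (0,1), and A := { z ∈ ℝ^d : γᵀ Σ⁻¹ z ≤ √(γᵀ Σ⁻¹ γ) · Φ⁻¹(p) }. Then for every measurable set S ⊆ ℝ^d with N(0,Σ)(S) ≥ N(0,Σ)(A), it holds that N(γ,Σ)(S) ≥ N(γ,Σ)(A); equivalently, for β ~ N(0,Σ), if P(β ∈ S) ≥ P(β ∈ A) then P(β + γ ∈ S) ≥ P(β + γ ∈ A). -/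
open MeasureTheory ProbabilityTheory Matrix Set

/-!
Neyman–Pearson argument. The density ratio of `N(γ, Σ)` to `N(0, Σ)` at `z` is
`exp (γᵀ Σ⁻¹ z - γᵀ Σ⁻¹ γ / 2)`, increasing in `γᵀ Σ⁻¹ z`. With `r` its value on the boundary
hyperplane of the half-space `A`, `N(γ, Σ) ≤ r • N(0, Σ)` on `A` and `N(γ, Σ) ≥ r • N(0, Σ)`
off `A`. If `N(0, Σ)(A) ≤ N(0, Σ)(T)`, cancelling the finite mass of `A ∩ T` gives
`N(0, Σ)(A \ T) ≤ N(0, Σ)(T \ A)`, hence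
`N(γ, Σ)(A \ T) ≤ r N(0, Σ)(A \ T) ≤ r N(0, Σ)(T \ A) ≤ N(γ, Σ)(T \ A)`.
-/

open scoped ENNReal
open WithLp

section NeymanPearson

variable {α : Type*} [MeasurableSpace α]

theorem measure_le_of_likelihood_ratio_bounds {μ ν : Measure α} {A T : Set α}
    (hA : MeasurableSet A) (hT : MeasurableSet T) {r : ℝ≥0∞}
    (hνA : ν.restrict A ≤ r • μ.restrict A) (hνAc : r • μ.restrict Aᶜ ≤ ν.restrict Aᶜ)
    (hμA : μ A ≠ ∞) (hAT : μ A ≤ μ T) : ν A ≤ ν T := by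
  have hν_AT : ν (A \ T) ≤ r * μ (A \ T) := by
    simpa [Measure.restrict_eq_self _ sdiff_subset] using hνA (A \ T)
  have hν_TA : r * μ (T \ A) ≤ ν (T \ A) := by
    simpa [Measure.restrict_eq_self _ (sdiff_subset_compl T A)] using hνAc (T \ A)
  have hμ : μ (A \ T) ≤ μ (T \ A) := by
    have hfin : μ (A ∩ T) ≠ ∞ := measure_ne_top_of_subset inter_subset_left hμA
    rw [← ENNReal.add_le_add_iff_left hfin, measure_inter_add_sdiff A hT, inter_comm,
      measure_inter_add_sdiff T hA]
    exact hAT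
  calc ν A = ν (A ∩ T) + ν (A \ T) := (measure_inter_add_sdiff A hT).symm
    _ ≤ ν (A ∩ T) + ν (T \ A) := by
      gcongr ν (A ∩ T) + ?_
      calc ν (A \ T) ≤ r * μ (A \ T) := hν_AT
        _ ≤ r * μ (T \ A) := by gcongr
        _ ≤ ν (T \ A) := hν_TA
    _ = ν T := by rw [inter_comm, measure_inter_add_sdiff T hA]

variable {ρ : Measure α} {f g : α → ℝ≥0∞}

theorem restrict_withDensity_mono {s : Set α} (hs : MeasurableSet s)
    (h : ∀ x ∈ s, f x ≤ g x) : (ρ.withDensity f).restrict s ≤ (ρ.withDensity g).restrict s := by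
  rw [restrict_withDensity hs, restrict_withDensity hs]
  exact withDensity_mono (ae_restrict_of_forall_mem hs h)

theorem withDensity_apply_le_of_density_ratio_bounds {A T : Set α}
    (hA : MeasurableSet A) (hT : MeasurableSet T) {r : ℝ≥0∞} (hr : r ≠ ∞)
    (hgA : ∀ x ∈ A, g x ≤ r * f x) (hgAc : ∀ x ∉ A, r * f x ≤ g x)
    (hfA : ρ.withDensity f A ≠ ∞) (hAT : ρ.withDensity f A ≤ ρ.withDensity f T) :
    ρ.withDensity g A ≤ ρ.withDensity g T := by
  refine measure_le_of_likelihood_ratio_bounds (r := r) hA hT ?_ ?_ hfA hAT <;>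
    rw [← Measure.restrict_smul, ← withDensity_smul' r f hr]
  · exact restrict_withDensity_mono hA hgA
  · exact restrict_withDensity_mono hA.compl hgAc

end NeymanPearson

theorem exists_pos_mul_sq_norm_le {E : Type*} [NormedAddCommGroup E] [NormedSpace ℝ E]
    [FiniteDimensional ℝ E] {q : E → ℝ} (hq : Continuous q)
    (hsmul : ∀ (a : ℝ) x, q (a • x) = a ^ 2 * q x) (hpos : ∀ x ≠ 0, 0 < q x) :
    ∃ c > 0, ∀ x, c * ‖x‖ ^ 2 ≤ q x := by
  rcases subsingleton_or_nontrivial E with hE | hE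
  · refine ⟨1, one_pos, fun x => ?_⟩
    have hq0 : q 0 = 0 := by simpa using hsmul 0 0
    simp [Subsingleton.elim x 0, hq0]
  obtain ⟨x₀, hx₀, hmin⟩ := (isCompact_sphere (0 : E) 1).exists_isMinOn
    (NormedSpace.sphere_nonempty.2 zero_le_one) hq.continuousOn
  have hx₀ : ‖x₀‖ = 1 := by simpa using hx₀
  refine ⟨q x₀, hpos x₀ (norm_ne_zero_iff.1 (by simp [hx₀])), fun x => ?_⟩
  rcases eq_or_ne x 0 with rfl | hx
  · simpa using (hsmul 0 0).ge
  have hnx : 0 < ‖x‖ := norm_pos_iff.2 hx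
  have hunit : ‖x‖⁻¹ • x ∈ Metric.sphere (0 : E) 1 := by
    simp [norm_smul, hnx.ne']
  calc q x₀ * ‖x‖ ^ 2 ≤ q (‖x‖⁻¹ • x) * ‖x‖ ^ 2 := by gcongr; exact hmin hunit
    _ = q x := by rw [hsmul]; field_simp

theorem Matrix.PosDef.exists_pos_mul_sq_norm_le_dotProduct_mulVec {ι : Type*} [Fintype ι]
    {M : Matrix ι ι ℝ} (hM : M.PosDef) :
    ∃ c > 0, ∀ z : EuclideanSpace ℝ ι, c * ‖z‖ ^ 2 ≤ ofLp z ⬝ᵥ (M *ᵥ ofLp z) := by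
  refine exists_pos_mul_sq_norm_le (by fun_prop) (fun a z => ?_) (fun z hz => ?_)
  · rw [ofLp_smul, mulVec_smul, smul_dotProduct, dotProduct_smul, smul_eq_mul, smul_eq_mul]
    ring
  · exact hM.dotProduct_mulVec_pos (by simpa using hz)

theorem integrable_exp_neg_mul_sq_norm {V : Type*} [NormedAddCommGroup V] [InnerProductSpace ℝ V]
    [FiniteDimensional ℝ V] [MeasurableSpace V] [BorelSpace V] {b : ℝ} (hb : 0 < b) :
    Integrable (fun v : V => Real.exp (-b * ‖v‖ ^ 2)) := by
  have hb' : 0 < (b : ℂ).re := by simpa using hb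
  refine (GaussianFourier.integrable_cexp_neg_mul_sq_norm_add hb' 0 0).norm.congr
    (ae_of_all _ fun v => ?_)
  simp [Complex.norm_exp, ← Complex.ofReal_pow]

variable {d : ℕ} {S : Matrix (Fin d) (Fin d) ℝ}

theorem gaussianPDF_nonneg (hS : S.PosDef) (μ z : EuclideanSpace ℝ (Fin d)) :
    0 ≤ gaussianPDF μ S z := by
  have := hS.det_pos
  unfold _root_.gaussianPDF
  positivity

theorem isFiniteMeasure_gaussianMeasure (hS : S.PosDef) (μ : EuclideanSpace ℝ (Fin d)) :
    IsFiniteMeasure (gaussianMeasure μ S) := by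
  obtain ⟨c, hc, hq⟩ := hS.inv.exists_pos_mul_sq_norm_le_dotProduct_mulVec
  set C := (2 * Real.pi) ^ (-(d : ℝ) / 2) * S.det ^ (-(1 : ℝ) / 2)
  have hC : 0 ≤ C := by have := hS.det_pos; positivity
  have hbound : ∀ z, gaussianPDF μ S z ≤ C * Real.exp (-(c / 2) * ‖z - μ‖ ^ 2) := by
    intro z
    have hz : c * ‖z - μ‖ ^ 2 ≤ (fun i => z i - μ i) ⬝ᵥ (S⁻¹ *ᵥ fun i => z i - μ i) := hq (z - μ)
    unfold _root_.gaussianPDF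
    gcongr _ * Real.exp ?_
    linarith
  have hint : Integrable fun z => C * Real.exp (-(c / 2) * ‖z - μ‖ ^ 2) :=
    ((integrable_exp_neg_mul_sq_norm (half_pos hc)).comp_sub_right μ).const_mul C
  refine ⟨?_⟩
  rw [gaussianMeasure, withDensity_apply _ MeasurableSet.univ, setLIntegral_univ]
  exact (lintegral_mono fun z => ENNReal.ofReal_le_ofReal (hbound z)).trans_lt hint.lintegral_lt_top

theorem gaussianPDF_eq_mul_exp (hS : S.IsSymm) (μ z : EuclideanSpace ℝ (Fin d)) :
    gaussianPDF μ S z = gaussianPDF 0 S z *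
      Real.exp (ofLp μ ⬝ᵥ (S⁻¹ *ᵥ ofLp z) - ofLp μ ⬝ᵥ (S⁻¹ *ᵥ ofLp μ) / 2) := by
  have hswap : ofLp z ⬝ᵥ (S⁻¹ *ᵥ ofLp μ) = ofLp μ ⬝ᵥ (S⁻¹ *ᵥ ofLp z) := by
    rw [dotProduct_mulVec, ← mulVec_transpose, transpose_nonsing_inv, hS.eq, dotProduct_comm]
  have hexpand : (fun i => z i - μ i) ⬝ᵥ (S⁻¹ *ᵥ fun i => z i - μ i) =
      ofLp z ⬝ᵥ (S⁻¹ *ᵥ ofLp z) - 2 * ofLp μ ⬝ᵥ (S⁻¹ *ᵥ ofLp z) + ofLp μ ⬝ᵥ (S⁻¹ *ᵥ ofLp μ) := by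
    change (ofLp z - ofLp μ) ⬝ᵥ (S⁻¹ *ᵥ (ofLp z - ofLp μ)) = _
    rw [mulVec_sub, sub_dotProduct, dotProduct_sub, dotProduct_sub, hswap]
    ring
  simp only [_root_.gaussianPDF, hexpand, PiLp.zero_apply, sub_zero, mul_assoc, ← Real.exp_add]
  congr 3
  ring

theorem gaussianPDF_le_mul_of_dotProduct_le (hS : S.IsSymm) (hpd : S.PosDef)
    {μ z : EuclideanSpace ℝ (Fin d)} {c : ℝ} (hz : ofLp μ ⬝ᵥ (S⁻¹ *ᵥ ofLp z) ≤ c) :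
    gaussianPDF μ S z ≤ Real.exp (c - ofLp μ ⬝ᵥ (S⁻¹ *ᵥ ofLp μ) / 2) * gaussianPDF 0 S z := by
  rw [gaussianPDF_eq_mul_exp hS μ z, mul_comm (Real.exp _)]
  gcongr
  exact gaussianPDF_nonneg hpd 0 z

theorem mul_le_gaussianPDF_of_le_dotProduct (hS : S.IsSymm) (hpd : S.PosDef)
    {μ z : EuclideanSpace ℝ (Fin d)} {c : ℝ} (hz : c ≤ ofLp μ ⬝ᵥ (S⁻¹ *ᵥ ofLp z)) :
    Real.exp (c - ofLp μ ⬝ᵥ (S⁻¹ *ᵥ ofLp μ) / 2) * gaussianPDF 0 S z ≤ gaussianPDF μ S z := by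
  rw [gaussianPDF_eq_mul_exp hS μ z, mul_comm (Real.exp _)]
  gcongr
  exact gaussianPDF_nonneg hpd 0 z

theorem gaussian_halfspace_neyman_pearson_lower_general
    {d : ℕ} (S : Matrix (Fin d) (Fin d) ℝ)
    (hsymm : S.IsSymm) (hpd : S.PosDef)
    (γ : EuclideanSpace ℝ (Fin d))
    (p : ℝ)
    (T : Set (EuclideanSpace ℝ (Fin d))) (hT : MeasurableSet T)
    (hTA : gaussianMeasure 0 S {z : EuclideanSpace ℝ (Fin d) |
            (fun i => γ i) ⬝ᵥ (S⁻¹ *ᵥ fun i => z i)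
              ≤ Real.sqrt ((fun i => γ i) ⬝ᵥ (S⁻¹ *ᵥ fun i => γ i)) * PhiInv p}
          ≤ gaussianMeasure 0 S T) :
    gaussianMeasure γ S {z : EuclideanSpace ℝ (Fin d) |
        (fun i => γ i) ⬝ᵥ (S⁻¹ *ᵥ fun i => z i)
          ≤ Real.sqrt ((fun i => γ i) ⬝ᵥ (S⁻¹ *ᵥ fun i => γ i)) * PhiInv p}
      ≤ gaussianMeasure γ S T := by
  set c := Real.sqrt ((fun i => γ i) ⬝ᵥ (S⁻¹ *ᵥ fun i => γ i)) * PhiInv p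
  set r := Real.exp (c - ofLp γ ⬝ᵥ (S⁻¹ *ᵥ ofLp γ) / 2)
  have hA : MeasurableSet {z : EuclideanSpace ℝ (Fin d) | ofLp γ ⬝ᵥ (S⁻¹ *ᵥ ofLp z) ≤ c} :=
    measurableSet_le (by fun_prop) measurable_const
  have := isFiniteMeasure_gaussianMeasure hpd 0
  refine withDensity_apply_le_of_density_ratio_bounds (r := ENNReal.ofReal r) hA hT
      ENNReal.ofReal_ne_top (fun z hz => ?_) (fun z hz => ?_)
      (measure_ne_top (gaussianMeasure 0 S) _) hTA <;>
    rw [← ENNReal.ofReal_mul (Real.exp_pos _).le] <;> apply ENNReal.ofReal_le_ofReal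
  · exact gaussianPDF_le_mul_of_dotProduct_le hsymm hpd hz
  · exact mul_le_gaussianPDF_of_le_dotProduct hsymm hpd (not_le.1 hz).le

/-- Neyman–Pearson type monotonicity for the lower half-space A:
any measurable set at least as likely as A under N(0,Σ) is at least as
likely as A under N(γ,Σ). -/
theorem gaussian_halfspace_neyman_pearson_lower
    {d : ℕ} (S : Matrix (Fin d) (Fin d) ℝ)
    (hsymm : S.IsSymm) (hpd : S.PosDef)
    (γ : EuclideanSpace ℝ (Fin d)) (hγ : γ ≠ 0)
    (p : ℝ) (hp : p ∈ Set.Ioo (0 : ℝ) 1)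
    (T : Set (EuclideanSpace ℝ (Fin d))) (hT : MeasurableSet T)
    (hTA : gaussianMeasure 0 S {z : EuclideanSpace ℝ (Fin d) |
            (fun i => γ i) ⬝ᵥ (S⁻¹ *ᵥ fun i => z i)
              ≤ Real.sqrt ((fun i => γ i) ⬝ᵥ (S⁻¹ *ᵥ fun i => γ i)) * PhiInv p}
          ≤ gaussianMeasure 0 S T) :
    gaussianMeasure γ S {z : EuclideanSpace ℝ (Fin d) |
        (fun i => γ i) ⬝ᵥ (S⁻¹ *ᵥ fun i => z i)
          ≤ Real.sqrt ((fun i => γ i) ⬝ᵥ (S⁻¹ *ᵥ fun i => γ i)) * PhiInv p}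
      ≤ gaussianMeasure γ S T :=
  gaussian_halfspace_neyman_pearson_lower_general S hsymm hpd γ p T hT hTA
end

section
/- Soundness of the furthest-corner inverse constraint for bilinear interpolation: let v, w ∈ ℝ and let p_{v,w}, p_{v,w+2}, p_{v+2,w}, p_{v+2,w+2} ∈ [0,1] be pixel values. For (x,y) ∈ [v, v+2] × [w, w+2] define the bilinear interpolation I(x,y) = p_{v,w}·((2+v−x)/2)·((2+w−y)/2) + p_{v,w+2}·((2+v−x)/2)·((y−w)/2) + p_{v+2,w}·((x−v)/2)·((2+w−y)/2) + p_{v+2,w+2}·((x−v)/2)·((y−w)/2). Let x_u ∈ [v, v+2), y_u ∈ [w, w+2), and suppose p' = I(x, y) for some (x, y) with v ≤ x ≤ x_u and w ≤ y ≤ y_u. Set D := ((2+v−x_u)/2)·((2+w−y_u)/2) > 0 and S := ((2+v−x_u)/2)·((y_u−w)/2) + ((x_u−v)/2)·((2+w−y_u)/2) + ((x_u−v)/2)·((y_u−w)/2). Then (p' − S)/D ≤ p_{v,w} ≤ p'/D; that is, p_{v,w} lies in the interval [p' − S, p'] · D^{-1}. -/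
/-!
Write `W` for the weight `((2+v-x)/2)((2+w-y)/2)` of the corner `p_{v,w}` at `(x,y)` and `D` for
the same weight at `(x_u,y_u)`, so that `0 < D ≤ W` because the weight decreases in both
coordinates. As the four weights are nonnegative and sum to `1` and all pixel values lie in
`[0,1]`, the interpolated value satisfies `p_{v,w} W ≤ p' ≤ p_{v,w} W + (1 - W)`. Replacing `W` by
the smaller `D` keeps both bounds, and `S = 1 - D` turns them into the claimed interval.
-/

open Set

/-- The hypotheses on `p` say it averages `c`, with weight `W`, against values in `[0,1]`. -/
theorem div_bounds_of_weight_le {c p D W : ℝ} (hc : c ∈ Icc (0 : ℝ) 1) (hD : 0 < D)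
    (hDW : D ≤ W) (hlo : c * W ≤ p) (hhi : p ≤ c * W + (1 - W)) :
    (p - (1 - D)) / D ≤ c ∧ c ≤ p / D := by
  obtain ⟨hc₀, hc₁⟩ := hc
  constructor
  · rw [div_le_iff₀ hD]
    nlinarith [mul_le_mul_of_nonneg_left hDW (sub_nonneg.mpr hc₁)]
  · rw [le_div_iff₀ hD]
    nlinarith [mul_le_mul_of_nonneg_left hDW hc₀]

section BilinearInterpolation

variable {v w p₀₀ p₀₂ p₂₀ p₂₂ x y : ℝ}

noncomputable def bilinearInterp (v w p₀₀ p₀₂ p₂₀ p₂₂ x y : ℝ) : ℝ :=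
  p₀₀ * ((2 + v - x) / 2) * ((2 + w - y) / 2)
    + p₀₂ * ((2 + v - x) / 2) * ((y - w) / 2)
    + p₂₀ * ((x - v) / 2) * ((2 + w - y) / 2)
    + p₂₂ * ((x - v) / 2) * ((y - w) / 2)

noncomputable def cornerWeight (v w x y : ℝ) : ℝ := ((2 + v - x) / 2) * ((2 + w - y) / 2)

theorem cornerWeight_pos (hx : x < v + 2) (hy : y < w + 2) : 0 < cornerWeight v w x y := by
  unfold cornerWeight
  apply mul_pos <;> linarith

theorem cornerWeight_le_cornerWeight {x' y' : ℝ} (hx : x ≤ x') (hx' : x' ≤ v + 2)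
    (hy : y ≤ y') (hy' : y' ≤ w + 2) : cornerWeight v w x' y' ≤ cornerWeight v w x y := by
  unfold cornerWeight
  apply mul_le_mul <;> linarith

theorem mul_cornerWeight_le_bilinearInterp (h₀₂ : 0 ≤ p₀₂) (h₂₀ : 0 ≤ p₂₀) (h₂₂ : 0 ≤ p₂₂)
    (hx : x ∈ Icc v (v + 2)) (hy : y ∈ Icc w (w + 2)) :
    p₀₀ * cornerWeight v w x y ≤ bilinearInterp v w p₀₀ p₀₂ p₂₀ p₂₂ x y := by
  obtain ⟨hx₀, hx₂⟩ := hx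
  obtain ⟨hy₀, hy₂⟩ := hy
  have hx₀' : 0 ≤ (x - v) / 2 := by linarith
  have hx₂' : 0 ≤ (2 + v - x) / 2 := by linarith
  have hy₀' : 0 ≤ (y - w) / 2 := by linarith
  have hy₂' : 0 ≤ (2 + w - y) / 2 := by linarith
  unfold bilinearInterp cornerWeight
  have := mul_nonneg (mul_nonneg h₀₂ hx₂') hy₀'
  have := mul_nonneg (mul_nonneg h₂₀ hx₀') hy₂'
  have := mul_nonneg (mul_nonneg h₂₂ hx₀') hy₀'
  linarith [mul_assoc p₀₀ ((2 + v - x) / 2) ((2 + w - y) / 2)]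

theorem bilinearInterp_le (h₀₂ : p₀₂ ≤ 1) (h₂₀ : p₂₀ ≤ 1) (h₂₂ : p₂₂ ≤ 1)
    (hx : x ∈ Icc v (v + 2)) (hy : y ∈ Icc w (w + 2)) :
    bilinearInterp v w p₀₀ p₀₂ p₂₀ p₂₂ x y
      ≤ p₀₀ * cornerWeight v w x y + (1 - cornerWeight v w x y) := by
  obtain ⟨hx₀, hx₂⟩ := hx
  obtain ⟨hy₀, hy₂⟩ := hy
  have hx₀' : 0 ≤ (x - v) / 2 := by linarith
  have hx₂' : 0 ≤ (2 + v - x) / 2 := by linarith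
  have hy₀' : 0 ≤ (y - w) / 2 := by linarith
  have hy₂' : 0 ≤ (2 + w - y) / 2 := by linarith
  unfold bilinearInterp cornerWeight
  have := mul_le_mul_of_nonneg_right h₀₂ (mul_nonneg hx₂' hy₀')
  have := mul_le_mul_of_nonneg_right h₂₀ (mul_nonneg hx₀' hy₂')
  have := mul_le_mul_of_nonneg_right h₂₂ (mul_nonneg hx₀' hy₀')
  linarith

end BilinearInterpolation

/-- Soundness of the furthest-corner inverse constraint for
bilinear interpolation: if p' = I(x,y) with v ≤ x ≤ x_u and w ≤ y ≤ y_u, then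
(p' − S)/D ≤ p_{v,w} ≤ p'/D, where D and S are the furthest-corner weights. -/
theorem bilinear_furthest_corner_constraint_sound
    (v w : ℝ) (pvw pvw2 pv2w pv2w2 : ℝ)
    (hvw : pvw ∈ Icc (0 : ℝ) 1) (hvw2 : pvw2 ∈ Icc (0 : ℝ) 1)
    (h2w : pv2w ∈ Icc (0 : ℝ) 1) (h2w2 : pv2w2 ∈ Icc (0 : ℝ) 1)
    (xu yu : ℝ) (hxu : xu ∈ Ico v (v + 2)) (hyu : yu ∈ Ico w (w + 2))
    (p' x y : ℝ)
    (hxl : v ≤ x) (hxr : x ≤ xu) (hyl : w ≤ y) (hyr : y ≤ yu)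
    (hp' : p' = pvw * ((2 + v - x) / 2) * ((2 + w - y) / 2)
        + pvw2 * ((2 + v - x) / 2) * ((y - w) / 2)
        + pv2w * ((x - v) / 2) * ((2 + w - y) / 2)
        + pv2w2 * ((x - v) / 2) * ((y - w) / 2)) :
    0 < ((2 + v - xu) / 2) * ((2 + w - yu) / 2) ∧
    (p' - (((2 + v - xu) / 2) * ((yu - w) / 2)
          + ((xu - v) / 2) * ((2 + w - yu) / 2)
          + ((xu - v) / 2) * ((yu - w) / 2)))
        / (((2 + v - xu) / 2) * ((2 + w - yu) / 2)) ≤ pvw ∧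
    pvw ≤ p' / (((2 + v - xu) / 2) * ((2 + w - yu) / 2)) := by
  have hxu₂ := hxu.2
  have hyu₂ := hyu.2
  have hx : x ∈ Icc v (v + 2) := ⟨hxl, by linarith⟩
  have hy : y ∈ Icc w (w + 2) := ⟨hyl, by linarith⟩
  have hD : 0 < cornerWeight v w xu yu := cornerWeight_pos hxu₂ hyu₂
  have hS : ((2 + v - xu) / 2) * ((yu - w) / 2) + ((xu - v) / 2) * ((2 + w - yu) / 2)
      + ((xu - v) / 2) * ((yu - w) / 2) = 1 - cornerWeight v w xu yu := by
    unfold cornerWeight; ring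
  rw [hS]
  exact ⟨hD, div_bounds_of_weight_le hvw hD
    (cornerWeight_le_cornerWeight hxr hxu₂.le hyr hyu₂.le)
    (hp' ▸ mul_cornerWeight_le_bilinearInterp hvw2.1 h2w.1 h2w2.1 hx hy)
    (hp' ▸ bilinearInterp_le hvw2.2 h2w.2 h2w2.2 hx hy)⟩
end
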